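/- arXiv:1802.02309 — 2 statements merged into one kernel-verified Lean document; each statement's English description precedes it below -/
import Mathlib

section
/- With Θ_1 and Θ_4 defined as in the comparison Θ_4 ≤ Θ_1, equality Θ_4 = Θ_1 holds if and only if the functions i ↦ Λ_i, i ↦ β_i, and i ↦ μ_i are all constant on M. -/
/-!
Write `A = ∑ πᵢΛᵢ`, `B = max Λ`, `m = min μ`, `c = max (μ/β)` and `D = ∑ πᵢβᵢ`. After cancelling the
common factor `∑ πᵢ(μᵢ + νᵢ + δᵢ)`, `Θ₄ = Θ₁` reads `A·m = B·(c·D)`, where `A ≤ B` and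
`m ≤ ∑ πᵢμᵢ ≤ c·D` (the last because `μᵢ ≤ c·βᵢ`). Since everything is positive, equality holds iff
each of these three inequalities is an equality. A weighted mean with positive weights equals a pointwise
upper (lower) bound only if it agrees with it at every point, so this means that `Λ`, `μ` and `μ/β`
are constant, i.e. that `Λ`, `β` and `μ` are constant.
-/

open Finset

lemma eq_iff_eq_and_eq_of_le_of_le {α : Type*} [PartialOrder α] {a b c : α} (hab : a ≤ b)
    (hbc : b ≤ c) : a = c ↔ a = b ∧ b = c :=
  ⟨fun h => ⟨hab.antisymm (hbc.trans_eq h.symm), hbc.antisymm (h.symm.trans_le hab)⟩,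
    fun h => h.1.trans h.2⟩

lemma forall_eq_sup'_iff {ι α : Type*} [Fintype ι] [Nonempty ι] [LinearOrder α] {f : ι → α} :
    (∀ i, f i = univ.sup' univ_nonempty f) ↔ ∀ i j, f i = f j := by
  refine ⟨fun h i j => (h i).trans (h j).symm, fun h i => ?_⟩
  obtain ⟨j, -, hj⟩ := exists_mem_eq_sup' univ_nonempty f
  rw [hj]
  exact h i j

lemma forall_eq_inf'_iff {ι α : Type*} [Fintype ι] [Nonempty ι] [LinearOrder α] {f : ι → α} :
    (∀ i, f i = univ.inf' univ_nonempty f) ↔ ∀ i j, f i = f j :=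
  forall_eq_sup'_iff (α := αᵒᵈ)

lemma forall_div_eq_div_and_forall_eq_iff {ι K : Type*} [DivisionRing K] {f g : ι → K} (hf : ∀ i, f i ≠ 0) :
    ((∀ i j, f i = f j) ∧ ∀ i j, f i / g i = f j / g j) ↔
      (∀ i j, g i = g j) ∧ ∀ i j, f i = f j := by
  rw [and_comm, and_congr_left_iff]
  intro hf_const
  refine forall₂_congr fun i j => ?_
  rw [hf_const i j, div_eq_mul_inv, div_eq_mul_inv, mul_right_inj' (hf j), inv_inj]

lemma weighted_sum_const {ι R : Type*} [Fintype ι] [Semiring R] {w : ι → R}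
    (hw : ∑ i, w i = 1) (a : R) : ∑ i, w i * a = a := by
  rw [← sum_mul, hw, one_mul]

section WeightedMean

variable {ι K : Type*} [Fintype ι] [Field K] [LinearOrder K] [IsStrictOrderedRing K] {w : ι → K}

lemma weighted_sum_le_weighted_sum (hw : ∀ i, 0 ≤ w i) {f g : ι → K} (hfg : ∀ i, f i ≤ g i) :
    ∑ i, w i * f i ≤ ∑ i, w i * g i :=
  sum_le_sum fun i _ => mul_le_mul_of_nonneg_left (hfg i) (hw i)

lemma weighted_sum_eq_weighted_sum_iff (hw : ∀ i, 0 < w i) {f g : ι → K}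
    (hfg : ∀ i, f i ≤ g i) : ∑ i, w i * f i = ∑ i, w i * g i ↔ ∀ i, f i = g i := by
  rw [sum_eq_sum_iff_of_le fun i _ => mul_le_mul_of_nonneg_left (hfg i) (hw i).le]
  simp only [mem_univ, forall_const, mul_right_inj' (hw _).ne']

variable [Nonempty ι]

lemma weighted_sum_le_sup' (hw : ∀ i, 0 ≤ w i) (hw1 : ∑ i, w i = 1) (f : ι → K) :
    ∑ i, w i * f i ≤ univ.sup' univ_nonempty f :=
  (weighted_sum_le_weighted_sum (g := fun _ => univ.sup' univ_nonempty f) hw fun i =>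
      le_sup' f (mem_univ i)).trans_eq
    (weighted_sum_const hw1 _)

lemma inf'_le_weighted_sum (hw : ∀ i, 0 ≤ w i) (hw1 : ∑ i, w i = 1) (f : ι → K) :
    univ.inf' univ_nonempty f ≤ ∑ i, w i * f i :=
  (weighted_sum_const hw1 _).symm.trans_le
    (weighted_sum_le_weighted_sum (f := fun _ => univ.inf' univ_nonempty f) hw fun i =>
      inf'_le f (mem_univ i))

lemma weighted_sum_eq_sup'_iff (hw : ∀ i, 0 < w i) (hw1 : ∑ i, w i = 1) (f : ι → K) :
    ∑ i, w i * f i = univ.sup' univ_nonempty f ↔ ∀ i j, f i = f j := by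
  rw [← weighted_sum_const hw1 (univ.sup' univ_nonempty f),
    weighted_sum_eq_weighted_sum_iff hw fun i => le_sup' f (mem_univ i), forall_eq_sup'_iff]

lemma inf'_eq_weighted_sum_iff (hw : ∀ i, 0 < w i) (hw1 : ∑ i, w i = 1) (f : ι → K) :
    univ.inf' univ_nonempty f = ∑ i, w i * f i ↔ ∀ i j, f i = f j := by
  rw [← weighted_sum_const hw1 (univ.inf' univ_nonempty f),
    weighted_sum_eq_weighted_sum_iff hw fun i => inf'_le f (mem_univ i)]
  exact (forall_congr' fun i => eq_comm).trans forall_eq_inf'_iff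

lemma le_sup'_div_mul {f g : ι → K} (hg : ∀ i, 0 < g i) (i : ι) :
    f i ≤ univ.sup' univ_nonempty (fun j => f j / g j) * g i :=
  (div_le_iff₀ (hg i)).1 (le_sup' (fun j => f j / g j) (mem_univ i))

lemma weighted_sum_le_sup'_div_mul (hw : ∀ i, 0 ≤ w i) {f g : ι → K} (hg : ∀ i, 0 < g i) :
    ∑ i, w i * f i ≤ univ.sup' univ_nonempty (fun j => f j / g j) * ∑ i, w i * g i := by
  rw [mul_sum]
  simpa only [mul_left_comm] using weighted_sum_le_weighted_sum hw (le_sup'_div_mul hg)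

lemma weighted_sum_eq_sup'_div_mul_iff (hw : ∀ i, 0 < w i) {f g : ι → K} (hg : ∀ i, 0 < g i) :
    ∑ i, w i * f i = univ.sup' univ_nonempty (fun j => f j / g j) * ∑ i, w i * g i ↔
      ∀ i j, f i / g i = f j / g j := by
  rw [mul_sum]
  simp only [mul_left_comm _ (w _)]
  rw [weighted_sum_eq_weighted_sum_iff hw (le_sup'_div_mul hg), ← forall_eq_sup'_iff]
  exact forall_congr' fun i => (div_eq_iff (hg i).ne').symm

end WeightedMean

theorem theta4_eq_theta1_iff
    {M : Type*} [Fintype M] [Nonempty M]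
    (Λ μ β ν δ π : M → ℝ)
    (hΛ : ∀ i, 0 < Λ i) (hμ : ∀ i, 0 < μ i) (hβ : ∀ i, 0 < β i)
    (hν : ∀ i, 0 < ν i) (hδ : ∀ i, 0 < δ i)
    (hπ : ∀ i, 0 < π i) (hπsum : ∑ i, π i = 1) :
    ((∑ i, π i * Λ i) /
      ((Finset.univ.sup' Finset.univ_nonempty (fun i => μ i / β i)) *
        ∑ i, π i * (μ i + ν i + δ i)) =
    ((Finset.univ.sup' Finset.univ_nonempty Λ) * ∑ i, π i * β i) /
      ((Finset.univ.inf' Finset.univ_nonempty μ) *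
        ∑ i, π i * (μ i + ν i + δ i)))
    ↔ ((∀ i j, Λ i = Λ j) ∧ (∀ i j, β i = β j) ∧ (∀ i j, μ i = μ j)) := by
  obtain ⟨i₀⟩ := ‹Nonempty M›
  have hπ₀ : ∀ i, 0 ≤ π i := fun i => (hπ i).le
  have hs : 0 < ∑ i, π i * (μ i + ν i + δ i) :=
    sum_pos (fun i _ => mul_pos (hπ i) (by linarith [hμ i, hν i, hδ i])) univ_nonempty
  have hc : 0 < univ.sup' univ_nonempty (fun i => μ i / β i) :=
    (lt_sup'_iff _).2 ⟨i₀, mem_univ _, div_pos (hμ i₀) (hβ i₀)⟩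
  have hm : 0 < univ.inf' univ_nonempty μ := (lt_inf'_iff _).2 fun i _ => hμ i
  have hB : 0 < univ.sup' univ_nonempty Λ := (lt_sup'_iff _).2 ⟨i₀, mem_univ _, hΛ i₀⟩
  have hmμ := inf'_le_weighted_sum hπ₀ hπsum μ
  have hμD := weighted_sum_le_sup'_div_mul hπ₀ hβ (f := μ)
  rw [← div_div, ← div_div, div_left_inj' hs.ne', div_eq_div_iff hc.ne' hm.ne', mul_assoc,
    mul_comm (∑ i, π i * β i)]
  rw [mul_eq_mul_iff_eq_and_eq_of_pos' (weighted_sum_le_sup' hπ₀ hπsum Λ) (hmμ.trans hμD) hB hm,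
    eq_iff_eq_and_eq_of_le_of_le hmμ hμD, weighted_sum_eq_sup'_iff hπ hπsum,
    inf'_eq_weighted_sum_iff hπ hπsum,
    weighted_sum_eq_sup'_div_mul_iff hπ hβ, forall_div_eq_div_and_forall_eq_iff fun i => (hμ i).ne']
end

section
/- For each i in a finite set M define R_0^(i) = Λ_i β_i / (μ_i (μ_i + ν_i + δ_i)). If R_0^(i) > 1 for every i ∈ M, then Θ_1 = (max_i Λ_i · Σ_i π_i β_i) / (min_i μ_i · Σ_i π_i (μ_i + ν_i + δ_i)) > 1 for every probability vector π on M with positive entries. -/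
/-! Each `R₀⁽ⁱ⁾ > 1` says `μᵢ (μᵢ + νᵢ + δᵢ) < Λᵢ βᵢ`; replacing `μᵢ` by the smaller
`min μ` and `Λᵢ` by the larger `max Λ` keeps this strict, and averaging with the weights `πᵢ` gives `Θ₁ > 1`. -/

open Finset

section
variable {ι K : Type*} [CommSemiring K] [LinearOrder K] [IsStrictOrderedRing K]
  {s : Finset ι} {f g u v w : ι → K}

theorem inf'_mul_lt_sup'_mul_of_mul_lt (hs : s.Nonempty) {i : ι} (hi : i ∈ s) (hu : 0 ≤ u i)
    (hv : 0 ≤ v i) (h : f i * u i < g i * v i) : s.inf' hs f * u i < s.sup' hs g * v i :=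
  calc s.inf' hs f * u i ≤ f i * u i := mul_le_mul_of_nonneg_right (inf'_le f hi) hu
    _ < g i * v i := h
    _ ≤ s.sup' hs g * v i := mul_le_mul_of_nonneg_right (le_sup' g hi) hv

theorem inf'_mul_sum_lt_sup'_mul_sum (hs : s.Nonempty) (hw : ∀ i ∈ s, 0 < w i)
    (hu : ∀ i ∈ s, 0 ≤ u i) (hv : ∀ i ∈ s, 0 ≤ v i)
    (h : ∀ i ∈ s, f i * u i < g i * v i) :
    s.inf' hs f * ∑ i ∈ s, w i * u i < s.sup' hs g * ∑ i ∈ s, w i * v i := by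
  rw [mul_sum, mul_sum]
  refine sum_lt_sum_of_nonempty hs fun i hi => ?_
  rw [mul_left_comm, mul_left_comm _ (w i)]
  exact mul_lt_mul_of_pos_left
    (inf'_mul_lt_sup'_mul_of_mul_lt hs hi (hu i hi) (hv i hi) (h i hi)) (hw i hi)

end

theorem theta1_gt_one_of_R0_gt_one_general
    {M : Type*} [Fintype M] [Nonempty M]
    (Λ μ β ν δ π : M → ℝ)
    (hμ : ∀ i, 0 < μ i) (hβ : ∀ i, 0 < β i)
    (hν : ∀ i, 0 < ν i) (hδ : ∀ i, 0 < δ i)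
    (hπ : ∀ i, 0 < π i)
    (hR0 : ∀ i, 1 < Λ i * β i / (μ i * (μ i + ν i + δ i))) :
    1 < ((Finset.univ.sup' Finset.univ_nonempty Λ) * ∑ i, π i * β i) /
      ((Finset.univ.inf' Finset.univ_nonempty μ) *
        ∑ i, π i * (μ i + ν i + δ i)) := by
  have hrate : ∀ i, 0 < μ i + ν i + δ i := fun i => by linarith [hμ i, hν i, hδ i]
  have hμmin : 0 < univ.inf' univ_nonempty μ := (lt_inf'_iff _).2 fun i _ => hμ i
  have hden : 0 < ∑ i, π i * (μ i + ν i + δ i) :=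
    sum_pos (fun i _ => mul_pos (hπ i) (hrate i)) univ_nonempty
  rw [one_lt_div (mul_pos hμmin hden)]
  exact inf'_mul_sum_lt_sup'_mul_sum _ (fun i _ => hπ i) (fun i _ => (hrate i).le)
    (fun i _ => (hβ i).le) fun i _ => (one_lt_div (mul_pos (hμ i) (hrate i))).1 (hR0 i)

theorem theta1_gt_one_of_R0_gt_one
    {M : Type*} [Fintype M] [Nonempty M]
    (Λ μ β ν δ π : M → ℝ)
    (hΛ : ∀ i, 0 < Λ i) (hμ : ∀ i, 0 < μ i) (hβ : ∀ i, 0 < β i)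
    (hν : ∀ i, 0 < ν i) (hδ : ∀ i, 0 < δ i)
    (hπ : ∀ i, 0 < π i) (hπsum : ∑ i, π i = 1)
    (hR0 : ∀ i, 1 < Λ i * β i / (μ i * (μ i + ν i + δ i))) :
    1 < ((Finset.univ.sup' Finset.univ_nonempty Λ) * ∑ i, π i * β i) /
      ((Finset.univ.inf' Finset.univ_nonempty μ) *
        ∑ i, π i * (μ i + ν i + δ i)) :=
  theta1_gt_one_of_R0_gt_one_general Λ μ β ν δ π hμ hβ hν hδ hπ hR0
end
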